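/- Let j ≥ 2 be an integer and let s ∈ ℝ satisfy −j + 1/2 ≤ s ≤ −j/2. There exists a constant C > 0 depending only on j and s such that for every real k with |k| ≥ 1 and every σ ∈ ℝ with |σ| > 2(2j+1)|k|^{2j+1}, one has both ⟨k⟩^s⟨σ⟩^{1/(2j)} ≤ C·⟨k⟩^{−s/j−1}⟨σ⟩^{s/j+1} and ⟨k⟩^{−s/j−1}⟨σ⟩^{s/j+1} ≤ C·⟨k⟩^s⟨σ⟩^{(2j−1)/(2j)}. -/
import Mathlib

noncomputable section

/-- Japanese bracket `⟨x⟩ = (1+x²)^{1/2}`. -/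
def jap (x : ℝ) : ℝ := Real.sqrt (1 + x ^ 2)

lemma one_le_jap (x : ℝ) : 1 ≤ jap x := by
  rw [jap]
  calc (1:ℝ) = Real.sqrt 1 := Real.sqrt_one.symm
    _ ≤ _ := Real.sqrt_le_sqrt (by nlinarith [sq_nonneg x])

lemma jap_pos (x : ℝ) : 0 < jap x := lt_of_lt_of_le one_pos (one_le_jap x)

lemma abs_le_jap (x : ℝ) : |x| ≤ jap x := by
  rw [jap, ← Real.sqrt_sq_eq_abs]
  exact Real.sqrt_le_sqrt (by nlinarith)

lemma jap_le (x : ℝ) (h : 1 ≤ |x|) : jap x ≤ Real.sqrt 2 * |x| := by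
  rw [jap, ← Real.sqrt_sq_eq_abs, ← Real.sqrt_mul (by norm_num)]
  have h2 : 1 ≤ x ^ 2 := by nlinarith [sq_abs x]
  exact Real.sqrt_le_sqrt (by nlinarith)

/-- **Pointwise weight comparison on the region `D₃`** (substance of Lemma 2.5 on `D₃`):
for `|k| ≥ 1` and `|σ| > 2(2j+1)|k|^{2j+1}`, one has
`⟨k⟩^s⟨σ⟩^{1/(2j)} ≤ C⟨k⟩^{−s/j−1}⟨σ⟩^{s/j+1}` and
`⟨k⟩^{−s/j−1}⟨σ⟩^{s/j+1} ≤ C⟨k⟩^s⟨σ⟩^{(2j−1)/(2j)}`. -/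
theorem stmt_13 (j : ℕ) (hj : 2 ≤ j) (s : ℝ)
    (hs₁ : -(j : ℝ) + 1 / 2 ≤ s) (hs₂ : s ≤ -(j : ℝ) / 2) :
    ∃ C : ℝ, 0 < C ∧ ∀ k σ : ℝ, 1 ≤ |k| →
      2 * (2 * (j : ℝ) + 1) * |k| ^ (2 * j + 1) < |σ| →
      jap k ^ s * jap σ ^ (1 / (2 * (j : ℝ))) ≤
          C * (jap k ^ (-s / (j : ℝ) - 1) * jap σ ^ (s / (j : ℝ) + 1)) ∧
      jap k ^ (-s / (j : ℝ) - 1) * jap σ ^ (s / (j : ℝ) + 1) ≤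
          C * (jap k ^ s * jap σ ^ ((2 * (j : ℝ) - 1) / (2 * (j : ℝ)))) := by
  have hj' : (2:ℝ) ≤ (j:ℝ) := by exact_mod_cast hj
  have hj0 : (0:ℝ) < (j:ℝ) := by linarith
  set α : ℝ := (-s / (j:ℝ) - 1) - s with hα
  set β : ℝ := -s / (j:ℝ) - 1 / (2 * (j:ℝ)) with hβ
  clear_value α β
  have hsj : 1 / 2 ≤ -s / (j:ℝ) := by
    rw [le_div_iff₀ hj0]; linarith
  have hα0 : 0 ≤ α := by
    have : (1:ℝ) ≤ -s := by linarith
    simp only [hα]; linarith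
  have hβ0 : 0 ≤ β := by
    have h1 : 1 / (2 * (j:ℝ)) ≤ 1 / (2 * 2) := by
      apply one_div_le_one_div_of_le <;> linarith
    simp only [hβ]; linarith
  refine ⟨(2:ℝ) ^ (α / 2), Real.rpow_pos_of_pos two_pos _, ?_⟩
  intro k σ hk hσ
  have hC1 : (1:ℝ) ≤ (2:ℝ) ^ (α / 2) := by
    calc (1:ℝ) = (2:ℝ) ^ (0:ℝ) := by rw [Real.rpow_zero]
    _ ≤ (2:ℝ) ^ (α / 2) := Real.rpow_le_rpow_of_exponent_le one_le_two (by linarith)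
  have hak := jap_pos k
  have hbs := jap_pos σ
  constructor
  · have h1 : jap k ^ s ≤ jap k ^ (-s / (j:ℝ) - 1) :=
      Real.rpow_le_rpow_of_exponent_le (one_le_jap k) (by linarith)
    have h2 : jap σ ^ (1 / (2 * (j:ℝ))) ≤ jap σ ^ (s / (j:ℝ) + 1) := by
      apply Real.rpow_le_rpow_of_exponent_le (one_le_jap σ)
      rw [div_add' _ _ _ hj0.ne', div_le_div_iff₀ (by positivity) hj0]
      nlinarith
    calc jap k ^ s * jap σ ^ (1 / (2 * (j:ℝ)))
        ≤ jap k ^ (-s / (j:ℝ) - 1) * jap σ ^ (s / (j:ℝ) + 1) :=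
          mul_le_mul h1 h2 (Real.rpow_nonneg hbs.le _) (Real.rpow_nonneg hak.le _)
      _ ≤ (2:ℝ) ^ (α / 2) * (jap k ^ (-s / (j:ℝ) - 1) * jap σ ^ (s / (j:ℝ) + 1)) := by
          apply le_mul_of_one_le_left (by positivity) hC1
  · -- key : jap k ^ α ≤ 2^(α/2) * jap σ ^ β
    have hkpow : |k| ^ (2 * j + 1) ≤ jap σ := by
      have h1 : (0:ℝ) < |k| ^ (2 * j + 1) := by positivity
      calc |k| ^ (2 * j + 1) ≤ 2 * (2 * (j:ℝ) + 1) * |k| ^ (2 * j + 1) := by nlinarith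
        _ ≤ |σ| := hσ.le
        _ ≤ jap σ := abs_le_jap σ
    have key : jap k ^ α ≤ (2:ℝ) ^ (α / 2) * jap σ ^ β := by
      calc jap k ^ α ≤ (Real.sqrt 2 * |k|) ^ α := by
            apply Real.rpow_le_rpow hak.le (jap_le k hk) hα0
        _ = (2:ℝ) ^ (α / 2) * |k| ^ α := by
            rw [Real.mul_rpow (Real.sqrt_nonneg 2) (abs_nonneg k),
              Real.sqrt_eq_rpow, ← Real.rpow_mul (by norm_num : (0:ℝ) ≤ 2)]
            congr 1
            ring
        _ ≤ (2:ℝ) ^ (α / 2) * |k| ^ ((2 * (j:ℝ) + 1) * β) := by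
            apply mul_le_mul_of_nonneg_left _ (by positivity)
            apply Real.rpow_le_rpow_of_exponent_le hk
            have hexp : (2 * (j:ℝ) + 1) * β - α = -s - 1 / (2 * (j:ℝ)) := by
              simp only [hα, hβ]; field_simp; ring
            have h1 : 1 / (2 * (j:ℝ)) ≤ 1 := by
              rw [div_le_one (by linarith)]; linarith
            have hs1 : 1 ≤ -s := by linarith
            nlinarith [hexp, hs1, h1]
        _ ≤ (2:ℝ) ^ (α / 2) * jap σ ^ β := by
            apply mul_le_mul_of_nonneg_left _ (by positivity)
            calc |k| ^ ((2 * (j:ℝ) + 1) * β) = (|k| ^ ((2 * (j:ℝ) + 1))) ^ β := by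
                  rw [← Real.rpow_mul (abs_nonneg k)]
              _ ≤ jap σ ^ β := by
                  apply Real.rpow_le_rpow (by positivity) _ hβ0
                  rw [show ((2 * (j:ℝ) + 1)) = ((2 * j + 1 : ℕ) : ℝ) by push_cast; ring,
                    Real.rpow_natCast]
                  exact hkpow
    have e1 : jap k ^ (-s / (j:ℝ) - 1) = jap k ^ s * jap k ^ α := by
      rw [← Real.rpow_add hak]; congr 1; rw [hα]; ring
    have e2 : jap σ ^ ((2 * (j:ℝ) - 1) / (2 * (j:ℝ))) = jap σ ^ (s / (j:ℝ) + 1) * jap σ ^ β := by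
      rw [← Real.rpow_add hbs]
      congr 1
      simp only [hβ]; field_simp; ring
    calc jap k ^ (-s / (j:ℝ) - 1) * jap σ ^ (s / (j:ℝ) + 1)
        = jap k ^ s * jap σ ^ (s / (j:ℝ) + 1) * jap k ^ α := by rw [e1]; ring
      _ ≤ jap k ^ s * jap σ ^ (s / (j:ℝ) + 1) * ((2:ℝ) ^ (α / 2) * jap σ ^ β) := by
          apply mul_le_mul_of_nonneg_left key (by positivity)
      _ = (2:ℝ) ^ (α / 2) * (jap k ^ s * jap σ ^ ((2 * (j:ℝ) - 1) / (2 * (j:ℝ)))) := by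
          rw [e2]; ring

end
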